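/- Let v be a classical solution of i∂_t v + ∂_x^2 v − ∂_x^4 v = 0 on [a,b] with v(a,t) = ∂_x v(a,t) = v(b,t) = ∂_x v(b,t) = 0. Then taking q ≡ 1 in the Morawetz identity gives −(1/2) Im [ ∫_a^b v \bar{∂_x v} dx ]_{t=0}^{t=T} + (1/2)∫_0^T ( |∂_x^2 v(b,t)|^2 − |∂_x^2 v(a,t)|^2 ) dt = 0 (all first-derivative and third-derivative boundary terms vanish). -/

import Mathlib

open Complex intervalIntegral

open MeasureTheory Set

noncomputable def pdx (g : ℝ × ℝ → ℂ) : ℝ × ℝ → ℂ := fun p => fderiv ℝ g p (0,1)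
noncomputable def pdt (g : ℝ × ℝ → ℂ) : ℝ × ℝ → ℂ := fun p => fderiv ℝ g p (1,0)

lemma contDiff_pdx {g : ℝ × ℝ → ℂ} (hg : ContDiff ℝ (⊤ : ℕ∞) g) : ContDiff ℝ (⊤ : ℕ∞) (pdx g) :=
  (hg.fderiv_right (mod_cast le_top)).clm_apply contDiff_const

lemma contDiff_pdt {g : ℝ × ℝ → ℂ} (hg : ContDiff ℝ (⊤ : ℕ∞) g) : ContDiff ℝ (⊤ : ℕ∞) (pdt g) :=
  (hg.fderiv_right (mod_cast le_top)).clm_apply contDiff_const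

lemma hasDerivAt_pdx {g : ℝ × ℝ → ℂ} (hg : ContDiff ℝ (⊤ : ℕ∞) g) (t x : ℝ) :
    HasDerivAt (fun y => g (t, y)) (pdx g (t, x)) x := by
  have h1 : HasFDerivAt g (fderiv ℝ g (t,x)) (t,x) :=
    ((hg.differentiable (by simp)) (t,x)).hasFDerivAt
  have h2 : HasDerivAt (fun y : ℝ => ((t, y) : ℝ × ℝ)) ((0,1) : ℝ × ℝ) x :=
    (hasDerivAt_const x t).prodMk (hasDerivAt_id x)
  exact h1.comp_hasDerivAt x h2

lemma hasDerivAt_pdt {g : ℝ × ℝ → ℂ} (hg : ContDiff ℝ (⊤ : ℕ∞) g) (t x : ℝ) :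
    HasDerivAt (fun τ => g (τ, x)) (pdt g (t, x)) t := by
  have h1 : HasFDerivAt g (fderiv ℝ g (t,x)) (t,x) :=
    ((hg.differentiable (by simp)) (t,x)).hasFDerivAt
  have h2 : HasDerivAt (fun τ : ℝ => ((τ, x) : ℝ × ℝ)) ((1,0) : ℝ × ℝ) t :=
    (hasDerivAt_id t).prodMk (hasDerivAt_const t x)
  exact h1.comp_hasDerivAt t h2

lemma pdt_pdx {g : ℝ × ℝ → ℂ} (hg : ContDiff ℝ (⊤ : ℕ∞) g) (p : ℝ × ℝ) :
    pdt (pdx g) p = pdx (pdt g) p := by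
  have hd : ∀ q, HasFDerivAt g (fderiv ℝ g q) q := fun q =>
    ((hg.differentiable (by simp)) q).hasFDerivAt
  have h2 : HasFDerivAt (fderiv ℝ g) (fderiv ℝ (fderiv ℝ g) p) p :=
    (((hg.fderiv_right (m := (⊤ : ℕ∞)) (mod_cast le_top)).differentiable (by simp)) p).hasFDerivAt
  have hsymm := second_derivative_symmetric hd h2 ((0,1) : ℝ × ℝ) ((1,0) : ℝ × ℝ)
  have e1 : pdt (pdx g) p = fderiv ℝ (fderiv ℝ g) p (1,0) (0,1) := by
    have hc := ((ContinuousLinearMap.apply ℝ ℂ ((0,1) : ℝ × ℝ)).hasFDerivAt).comp p h2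
    have : fderiv ℝ (pdx g) p =
        (ContinuousLinearMap.apply ℝ ℂ ((0,1) : ℝ × ℝ)).comp (fderiv ℝ (fderiv ℝ g) p) :=
      hc.fderiv
    simp [pdt, pdx, this]
  have e2 : pdx (pdt g) p = fderiv ℝ (fderiv ℝ g) p (0,1) (1,0) := by
    have hc := ((ContinuousLinearMap.apply ℝ ℂ ((1,0) : ℝ × ℝ)).hasFDerivAt).comp p h2
    have : fderiv ℝ (pdt g) p =
        (ContinuousLinearMap.apply ℝ ℂ ((1,0) : ℝ × ℝ)).comp (fderiv ℝ (fderiv ℝ g) p) :=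
      hc.fderiv
    simp [pdt, pdx, this]
  rw [e1, e2, hsymm]

lemma hasDerivAt_conj {g : ℝ → ℂ} {g' : ℂ} {x : ℝ} (h : HasDerivAt g g' x) :
    HasDerivAt (fun y => (starRingEnd ℂ) (g y)) ((starRingEnd ℂ) g') x := by
  exact
    ((Complex.conjCLE : ℂ ≃L[ℝ] ℂ).toContinuousLinearMap.hasFDerivAt.comp_hasDerivAt x h)

lemma hasDerivAt_im {g : ℝ → ℂ} {g' : ℂ} {x : ℝ} (h : HasDerivAt g g' x) :
    HasDerivAt (fun y => (g y).im) g'.im x := by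
  exact (Complex.imCLM.hasFDerivAt.comp_hasDerivAt x h)

lemma hasDerivAt_re {g : ℝ → ℂ} {g' : ℂ} {x : ℝ} (h : HasDerivAt g g' x) :
    HasDerivAt (fun y => (g y).re) g'.re x := by
  exact (Complex.reCLM.hasFDerivAt.comp_hasDerivAt x h)

/-- the time-derivative of the momentum density. -/
noncomputable def DD (f : ℝ × ℝ → ℂ) : ℝ → ℝ → ℝ := fun t x =>
  (pdt f (t,x) * (starRingEnd ℂ) (pdx f (t,x))
    + f (t,x) * (starRingEnd ℂ) (pdt (pdx f) (t,x))).im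

/-- the antiderivative in `x` of `DD`. -/
noncomputable def FF (f : ℝ × ℝ → ℂ) : ℝ → ℝ → ℝ := fun t x =>
  (pdx f (t,x) * (starRingEnd ℂ) (pdx f (t,x))
    + pdx (pdx f) (t,x) * (starRingEnd ℂ) (pdx (pdx f) (t,x))
    - pdx (pdx (pdx f)) (t,x) * (starRingEnd ℂ) (pdx f (t,x))
    - f (t,x) * (starRingEnd ℂ) (pdx (pdx f) (t,x))
    + f (t,x) * (starRingEnd ℂ) (pdx (pdx (pdx (pdx f))) (t,x))
    - pdx f (t,x) * (starRingEnd ℂ) (pdx (pdx (pdx f)) (t,x))).re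

lemma continuous_DD {f : ℝ × ℝ → ℂ} (hf : ContDiff ℝ (⊤ : ℕ∞) f) :
    Continuous (fun p : ℝ × ℝ => DD f p.1 p.2) := by
  apply Complex.continuous_im.comp
  apply Continuous.add
  · exact ((contDiff_pdt hf).continuous.mul
      (Complex.continuous_conj.comp (contDiff_pdx hf).continuous))
  · exact (hf.continuous.mul
      (Complex.continuous_conj.comp (contDiff_pdt (contDiff_pdx hf)).continuous))

lemma time_deriv {f : ℝ × ℝ → ℂ} (hf : ContDiff ℝ (⊤ : ℕ∞) f) (t x : ℝ) :
    HasDerivAt (fun τ => (f (τ,x) * (starRingEnd ℂ) (pdx f (τ,x))).im) (DD f t x) t :=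
  hasDerivAt_im ((hasDerivAt_pdt hf t x).mul
    (hasDerivAt_conj (hasDerivAt_pdt (contDiff_pdx hf) t x)))

lemma space_deriv {f : ℝ × ℝ → ℂ} (hf : ContDiff ℝ (⊤ : ℕ∞) f)
    (hP2 : ∀ t x : ℝ, pdt f (t,x) =
      Complex.I * (pdx (pdx f) (t,x) - pdx (pdx (pdx (pdx f))) (t,x)))
    (hP3 : ∀ t x : ℝ, pdt (pdx f) (t,x) =
      Complex.I * (pdx (pdx (pdx f)) (t,x) - pdx (pdx (pdx (pdx (pdx f)))) (t,x)))
    (t x : ℝ) :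
    HasDerivAt (fun y => FF f t y) (DD f t x) x := by
  have hc0 := hf
  have hc1 := contDiff_pdx hc0
  have hc2 := contDiff_pdx hc1
  have hc3 := contDiff_pdx hc2
  have hc4 := contDiff_pdx hc3
  have h0 := hasDerivAt_pdx hc0 t x
  have h1 := hasDerivAt_pdx hc1 t x
  have h2 := hasDerivAt_pdx hc2 t x
  have h3 := hasDerivAt_pdx hc3 t x
  have h4 := hasDerivAt_pdx hc4 t x
  have H := hasDerivAt_re
    ((((((h1.mul (hasDerivAt_conj h1)).add (h2.mul (hasDerivAt_conj h2))).sub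
      (h3.mul (hasDerivAt_conj h1))).sub (h0.mul (hasDerivAt_conj h2))).add
      (h0.mul (hasDerivAt_conj h4))).sub (h1.mul (hasDerivAt_conj h3)))
  have heq : ((((((pdx (pdx f) (t,x) * (starRingEnd ℂ) (pdx f (t,x))
        + pdx f (t,x) * (starRingEnd ℂ) (pdx (pdx f) (t,x)))
      + (pdx (pdx (pdx f)) (t,x) * (starRingEnd ℂ) (pdx (pdx f) (t,x))
        + pdx (pdx f) (t,x) * (starRingEnd ℂ) (pdx (pdx (pdx f)) (t,x))))
      - (pdx (pdx (pdx (pdx f))) (t,x) * (starRingEnd ℂ) (pdx f (t,x))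
        + pdx (pdx (pdx f)) (t,x) * (starRingEnd ℂ) (pdx (pdx f) (t,x))))
      - (pdx f (t,x) * (starRingEnd ℂ) (pdx (pdx f) (t,x))
        + f (t,x) * (starRingEnd ℂ) (pdx (pdx (pdx f)) (t,x))))
      + (pdx f (t,x) * (starRingEnd ℂ) (pdx (pdx (pdx (pdx f))) (t,x))
        + f (t,x) * (starRingEnd ℂ) (pdx (pdx (pdx (pdx (pdx f)))) (t,x))))
      - (pdx (pdx f) (t,x) * (starRingEnd ℂ) (pdx (pdx (pdx f)) (t,x))
        + pdx f (t,x) * (starRingEnd ℂ) (pdx (pdx (pdx (pdx f))) (t,x)))).re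
      = DD f t x := by
    rw [DD, hP2, hP3]
    simp only [map_mul, map_sub, Complex.conj_I, Complex.add_re, Complex.sub_re,
      Complex.add_im, Complex.sub_im, Complex.mul_re, Complex.mul_im, Complex.conj_re,
      Complex.conj_im, Complex.I_re, Complex.I_im, Complex.neg_re, Complex.neg_im]
    ring
  rw [heq] at H
  exact H

/-- Specialization of the Morawetz multiplier identity with `q ≡ 1` on a single clamped
edge: for a classical solution `v` (here `v t x`) of `i∂ₜv + ∂ₓ²v − ∂ₓ⁴v = 0` on `[a,b]`
with `v = ∂ₓv = 0` at both endpoints,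
`−½ Im[∫ v ∂ₓv̄ dx]₀ᵀ + ½∫₀ᵀ (|∂ₓ²v(b)|² − |∂ₓ²v(a)|²) dt = 0`. -/
theorem multiplier_q_eq_one (a b T : ℝ) (hab : a ≤ b) (hT : 0 < T)
    (v : ℝ → ℝ → ℂ)  -- v t x
    (hsm : ContDiff ℝ (⊤ : ℕ∞) (fun p : ℝ × ℝ => v p.1 p.2))
    (hpde : ∀ t x : ℝ,
      Complex.I * deriv (fun τ => v τ x) t
        + iteratedDeriv 2 (v t) x - iteratedDeriv 4 (v t) x = 0)
    (hbc : ∀ t : ℝ, v t a = 0 ∧ deriv (v t) a = 0 ∧ v t b = 0 ∧ deriv (v t) b = 0) :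
    -(1 / 2 : ℝ) *
        ((∫ x in a..b, v T x * (starRingEnd ℂ) (deriv (v T) x)).im
          - (∫ x in a..b, v 0 x * (starRingEnd ℂ) (deriv (v 0) x)).im)
      + (1 / 2 : ℝ) * (∫ t in (0:ℝ)..T,
          (‖iteratedDeriv 2 (v t) b‖ ^ 2 - ‖iteratedDeriv 2 (v t) a‖ ^ 2))
    = 0 := by
  set f : ℝ × ℝ → ℂ := fun p => v p.1 p.2 with hfdef
  have hc0 : ContDiff ℝ (⊤ : ℕ∞) f := hsm
  have hc1 := contDiff_pdx hc0
  have hc2 := contDiff_pdx hc1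
  have hc3 := contDiff_pdx hc2
  have hc4 := contDiff_pdx hc3
  -- spatial derivatives of v in terms of pdx
  have hderiv : ∀ t : ℝ, deriv (v t) = fun x => pdx f (t, x) :=
    fun t => funext fun x => (hasDerivAt_pdx hc0 t x).deriv
  have hderiv2 : ∀ t : ℝ, deriv (fun x => pdx f (t, x)) = fun x => pdx (pdx f) (t, x) :=
    fun t => funext fun x => (hasDerivAt_pdx hc1 t x).deriv
  have hderiv3 : ∀ t : ℝ, deriv (fun x => pdx (pdx f) (t, x))
      = fun x => pdx (pdx (pdx f)) (t, x) :=
    fun t => funext fun x => (hasDerivAt_pdx hc2 t x).deriv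
  have hderiv4 : ∀ t : ℝ, deriv (fun x => pdx (pdx (pdx f)) (t, x))
      = fun x => pdx (pdx (pdx (pdx f))) (t, x) :=
    fun t => funext fun x => (hasDerivAt_pdx hc3 t x).deriv
  have hit2 : ∀ t x : ℝ, iteratedDeriv 2 (v t) x = pdx (pdx f) (t, x) := by
    intro t x
    rw [show (2:ℕ) = 1 + 1 from rfl, iteratedDeriv_succ, iteratedDeriv_one,
      hderiv t, hderiv2 t]
  have hit4 : ∀ t x : ℝ, iteratedDeriv 4 (v t) x = pdx (pdx (pdx (pdx f))) (t, x) := by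
    intro t x
    rw [show (4:ℕ) = 1 + 1 + 1 + 1 from rfl, iteratedDeriv_succ, iteratedDeriv_succ,
      iteratedDeriv_succ, iteratedDeriv_one, hderiv t, hderiv2 t, hderiv3 t, hderiv4 t]
  have hptd : ∀ t x : ℝ, deriv (fun τ => v τ x) t = pdt f (t, x) :=
    fun t x => (hasDerivAt_pdt hc0 t x).deriv
  -- PDE rewritten
  have hP2 : ∀ t x : ℝ, pdt f (t,x) =
      Complex.I * (pdx (pdx f) (t,x) - pdx (pdx (pdx (pdx f))) (t,x)) := by
    intro t x
    have h := hpde t x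
    rw [hit2 t x, hit4 t x, hptd t x] at h
    linear_combination (-Complex.I) * h + (pdt f (t,x)) * Complex.I_sq
  have hP3 : ∀ t x : ℝ, pdt (pdx f) (t,x) =
      Complex.I * (pdx (pdx (pdx f)) (t,x) - pdx (pdx (pdx (pdx (pdx f)))) (t,x)) := by
    intro t x
    rw [pdt_pdx hc0]
    have ha := hasDerivAt_pdx (contDiff_pdt hc0) t x
    have e : (fun y => pdt f (t, y))
        = fun y => Complex.I * (pdx (pdx f) (t,y) - pdx (pdx (pdx (pdx f))) (t,y)) :=
      funext fun y => hP2 t y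
    rw [e] at ha
    have hb := HasDerivAt.const_mul Complex.I
      ((hasDerivAt_pdx hc2 t x).sub (hasDerivAt_pdx hc4 t x))
    exact ha.unique hb
  -- continuity helpers
  have contD := continuous_DD hc0
  have contmom : Continuous (fun p : ℝ × ℝ => (f p * (starRingEnd ℂ) (pdx f p)).im) :=
    Complex.continuous_im.comp
      (hc0.continuous.mul (Complex.continuous_conj.comp hc1.continuous))
  -- FTC in time
  have hFTCt : ∀ x : ℝ, (∫ t in (0:ℝ)..T, DD f t x)
      = (f (T,x) * (starRingEnd ℂ) (pdx f (T,x))).im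
        - (f (0,x) * (starRingEnd ℂ) (pdx f (0,x))).im := by
    intro x
    exact intervalIntegral.integral_eq_sub_of_hasDerivAt
      (fun t _ => time_deriv hc0 t x)
      ((contD.comp (continuous_id.prodMk continuous_const)).intervalIntegrable 0 T)
  -- FTC in space
  have hFTCx : ∀ t : ℝ, (∫ x in a..b, DD f t x) = FF f t b - FF f t a := by
    intro t
    exact intervalIntegral.integral_eq_sub_of_hasDerivAt
      (fun x _ => space_deriv hc0 hP2 hP3 t x)
      ((contD.comp (continuous_const.prodMk continuous_id)).intervalIntegrable a b)
  -- boundary values of FF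
  have hFb : ∀ t : ℝ, FF f t b = ‖iteratedDeriv 2 (v t) b‖ ^ 2 := by
    intro t
    have hz0 : f (t, b) = 0 := (hbc t).2.2.1
    have hz1 : pdx f (t, b) = 0 := by
      rw [← congrFun (hderiv t) b]; exact (hbc t).2.2.2
    rw [hit2 t b]
    simp [FF, hz0, hz1, Complex.mul_conj, Complex.normSq_eq_norm_sq, ← Complex.ofReal_pow]
  have hFa : ∀ t : ℝ, FF f t a = ‖iteratedDeriv 2 (v t) a‖ ^ 2 := by
    intro t
    have hz0 : f (t, a) = 0 := (hbc t).1
    have hz1 : pdx f (t, a) = 0 := by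
      rw [← congrFun (hderiv t) a]; exact (hbc t).2.1
    rw [hit2 t a]
    simp [FF, hz0, hz1, Complex.mul_conj, Complex.normSq_eq_norm_sq, ← Complex.ofReal_pow]
  -- Fubini
  have hswap : (∫ t in (0:ℝ)..T, ∫ x in a..b, DD f t x)
      = ∫ x in a..b, ∫ t in (0:ℝ)..T, DD f t x := by
    have hint : Integrable (Function.uncurry (DD f))
        ((volume.restrict (Ioc 0 T)).prod (volume.restrict (Ioc a b))) := by
      rw [Measure.prod_restrict, ← Measure.volume_eq_prod]
      have : IntegrableOn (Function.uncurry (DD f)) (Icc 0 T ×ˢ Icc a b) volume :=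
        (contD.continuousOn.integrableOn_compact (isCompact_Icc.prod isCompact_Icc))
      exact this.mono_set (Set.prod_mono Set.Ioc_subset_Icc_self Set.Ioc_subset_Icc_self)
    simp_rw [intervalIntegral.integral_of_le hT.le, intervalIntegral.integral_of_le hab]
    exact MeasureTheory.integral_integral_swap hint
  -- momentum integrals
  have contmomC : Continuous (fun p : ℝ × ℝ => f p * (starRingEnd ℂ) (pdx f p)) :=
    hc0.continuous.mul (Complex.continuous_conj.comp hc1.continuous)
  have hIm : ∀ s : ℝ, (∫ x in a..b, (f (s,x) * (starRingEnd ℂ) (pdx f (s,x))).im)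
      = (∫ x in a..b, v s x * (starRingEnd ℂ) (deriv (v s) x)).im := by
    intro s
    have hint : IntervalIntegrable (fun x => f (s,x) * (starRingEnd ℂ) (pdx f (s,x)))
        volume a b :=
      (contmomC.comp (continuous_const.prodMk continuous_id)).intervalIntegrable a b
    have hi := Complex.imCLM.intervalIntegral_comp_comm hint
    rw [hderiv s]
    exact hi.symm ▸ rfl
  -- final assembly
  have hintim : ∀ s : ℝ, IntervalIntegrable
      (fun x => (f (s,x) * (starRingEnd ℂ) (pdx f (s,x))).im) volume a b :=
    fun s => (contmom.comp (continuous_const.prodMk continuous_id)).intervalIntegrable a b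
  have key : (∫ t in (0:ℝ)..T,
        (‖iteratedDeriv 2 (v t) b‖ ^ 2 - ‖iteratedDeriv 2 (v t) a‖ ^ 2))
      = (∫ x in a..b, v T x * (starRingEnd ℂ) (deriv (v T) x)).im
        - (∫ x in a..b, v 0 x * (starRingEnd ℂ) (deriv (v 0) x)).im := by
    have e1 : (∫ t in (0:ℝ)..T,
          (‖iteratedDeriv 2 (v t) b‖ ^ 2 - ‖iteratedDeriv 2 (v t) a‖ ^ 2))
        = ∫ t in (0:ℝ)..T, ∫ x in a..b, DD f t x := by
      apply intervalIntegral.integral_congr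
      intro t _
      dsimp only
      rw [hFTCx t, hFb t, hFa t]
    rw [e1, hswap]
    have e2 : (∫ x in a..b, ∫ t in (0:ℝ)..T, DD f t x)
        = ∫ x in a..b, ((f (T,x) * (starRingEnd ℂ) (pdx f (T,x))).im
            - (f (0,x) * (starRingEnd ℂ) (pdx f (0,x))).im) := by
      apply intervalIntegral.integral_congr
      intro x _
      dsimp only
      rw [hFTCt x]
    rw [e2, intervalIntegral.integral_sub (hintim T) (hintim 0), hIm T, hIm 0]
  rw [key]
  ring
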